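/- arXiv:2510.16236 — 9 statements merged into one kernel-verified Lean document; each statement's English description precedes it below -/
import Mathlib

section
/- If D is an edge open packing set of a graph G, then the subgraph induced by the endpoints of the edges of D together with the edges of D is a disjoint union of stars. -/
namespace EOP

variable {V : Type*}

/-- Two edges `e₁ e₂` have a common edge in `G`: an edge of `G`, distinct from both,
joining an endpoint of `e₁` to an endpoint of `e₂`. -/
def HasCommonEdge (G : SimpleGraph V) (e₁ e₂ : Sym2 V) : Prop :=
  ∃ a b, G.Adj a b ∧ s(a, b) ≠ e₁ ∧ s(a, b) ≠ e₂ ∧ a ∈ e₁ ∧ b ∈ e₂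

/-- `D` is an edge open packing set of `G`. -/
def IsEOPSet (G : SimpleGraph V) (D : Set (Sym2 V)) : Prop :=
  D ⊆ G.edgeSet ∧ ∀ e₁ ∈ D, ∀ e₂ ∈ D, e₁ ≠ e₂ → ¬ HasCommonEdge G e₁ e₂

/-- The edge open packing number of `G`. -/
noncomputable def eopNumber (G : SimpleGraph V) : ℕ :=
  sSup {n | ∃ D : Set (Sym2 V), IsEOPSet G D ∧ D.ncard = n}

end EOP

open EOP in
/-- If `D` is an edge open packing set of `G`, then the edge-induced subgraph `G⟨D⟩`
is a disjoint union of stars: each edge has a chosen center, and two distinct edges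
of `D` can only meet at their common center. -/
theorem stmt_4 {V : Type*} (G : SimpleGraph V) (D : Set (Sym2 V))
    (hD : IsEOPSet G D) :
    ∃ f : Sym2 V → V, (∀ e ∈ D, f e ∈ e) ∧
      ∀ e₁ ∈ D, ∀ e₂ ∈ D, e₁ ≠ e₂ → ∀ v, v ∈ e₁ → v ∈ e₂ → v = f e₁ ∧ v = f e₂ := by

  classical
  -- key claim: each edge of D has a "center" vertex
  have key : ∀ e ∈ D, ∃ v, v ∈ e ∧
      ∀ e' ∈ D, e' ≠ e → ∀ w, w ∈ e → w ∈ e' → w = v := by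
    intro e he
    obtain ⟨x, y⟩ := e
    have hxy : G.Adj x y := hD.1 he
    have hne : x ≠ y := hxy.ne
    by_cases hY : ∃ e' ∈ D, e' ≠ s(x, y) ∧ y ∈ e'
    · obtain ⟨e₂, he₂, he₂ne, hy₂⟩ := hY
      refine ⟨y, Sym2.mem_mk_right x y, ?_⟩
      intro e' he' hne' w hw hw'
      rcases Sym2.mem_iff.mp hw with rfl | rfl
      · -- w = x ∈ e' : derive contradiction
        exfalso
        by_cases h12 : e' = e₂
        · subst h12
          have : e' = s(w, y) := (Sym2.mem_and_mem_iff hne).mp ⟨hw', hy₂⟩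
          exact hne' this
        · exact hD.2 e' he' e₂ he₂ h12 ⟨w, y, hxy, hne'.symm, he₂ne.symm, hw', hy₂⟩
      · rfl
    · push_neg at hY
      refine ⟨x, Sym2.mem_mk_left x y, ?_⟩
      intro e' he' hne' w hw hw'
      rcases Sym2.mem_iff.mp hw with rfl | rfl
      · rfl
      · exact absurd hw' (hY e' he' hne')
  set P : Sym2 V → V → Prop := fun e v => v ∈ e ∧
      ∀ e' ∈ D, e' ≠ e → ∀ w, w ∈ e → w ∈ e' → w = v with hP
  have hex : ∀ e ∈ D, ∃ v, P e v := key
  set f : Sym2 V → V := fun e =>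
    if h : ∃ v, P e v then h.choose else (Quot.out e).1 with hfdef
  have hfP : ∀ e ∈ D, P e (f e) := by
    intro e he
    have h : ∃ v, P e v := hex e he
    simp only [hfdef, dif_pos h]
    exact h.choose_spec
  refine ⟨f, fun e he => (hfP e he).1, ?_⟩
  intro e₁ he₁ e₂ he₂ hne v hv₁ hv₂
  exact ⟨(hfP e₁ he₁).2 e₂ he₂ (Ne.symm hne) v hv₁ hv₂,
    (hfP e₂ he₂).2 e₁ he₁ hne v hv₂ hv₁⟩
end

section
/- Let G be a graph whose edge set is partitioned into color classes by an injective k-edge coloring. Then each color class is an edge open packing set of G; consequently ρ_e^o(G) ≥ |E(G)| / χ'_i(G). -/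
namespace EOP

/-- An injective `k`-edge coloring of `G`: any two distinct edges that have a common
adjacent edge receive distinct colors. -/
def IsInjEdgeColoring (G : SimpleGraph V) (k : ℕ) (c : Sym2 V → Fin k) : Prop :=
  ∀ e₁ ∈ G.edgeSet, ∀ e₂ ∈ G.edgeSet, e₁ ≠ e₂ → HasCommonEdge G e₁ e₂ → c e₁ ≠ c e₂

/-- The injective chromatic index `χ'_i(G)`. -/
noncomputable def injChromIndex (G : SimpleGraph V) : ℕ :=
  sInf {k | ∃ c : Sym2 V → Fin k, IsInjEdgeColoring G k c}

end EOP

open EOP in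
/-- If the edges of `G` are colored by an injective `k`-edge coloring, then each color
class is an edge open packing set; consequently `ρ_e^o(G) ≥ |E(G)| / χ'_i(G)`. -/
theorem stmt_5 {V : Type*} [Fintype V] (G : SimpleGraph V) (k : ℕ)
    (c : Sym2 V → Fin k) (hc : IsInjEdgeColoring G k c) :
    (∀ i : Fin k, IsEOPSet G {e ∈ G.edgeSet | c e = i}) ∧
    (G.edgeSet.ncard : ℚ) / (injChromIndex G : ℚ) ≤ (eopNumber G : ℚ) := by
  classical
  have key : ∀ (m : ℕ) (c' : Sym2 V → Fin m), IsInjEdgeColoring G m c' →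
      ∀ i : Fin m, IsEOPSet G {e ∈ G.edgeSet | c' e = i} := by
    intro m c' hc' i
    refine ⟨fun e he => he.1, ?_⟩
    rintro e₁ ⟨h1, hc1⟩ e₂ ⟨h2, hc2⟩ hne hcom
    exact hc' e₁ h1 e₂ h2 hne hcom (hc1.trans hc2.symm)
  refine ⟨key k c hc, ?_⟩
  rcases Nat.eq_zero_or_pos (injChromIndex G) with h0 | hpos
  · rw [h0]
    simp
  · obtain ⟨c', hc'⟩ : ∃ c' : Sym2 V → Fin (injChromIndex G),
        IsInjEdgeColoring G (injChromIndex G) c' :=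
      Nat.sInf_mem (⟨k, c, hc⟩ : {n | ∃ c' : Sym2 V → Fin n, IsInjEdgeColoring G n c'}.Nonempty)
    have hbdd : BddAbove {n | ∃ D : Set (Sym2 V), IsEOPSet G D ∧ D.ncard = n} := by
      refine ⟨(Set.univ : Set (Sym2 V)).ncard, ?_⟩
      rintro n ⟨D, hD, rfl⟩
      exact Set.ncard_le_ncard (Set.subset_univ D) (Set.toFinite _)
    have hle : ∀ i : Fin (injChromIndex G),
        ({e ∈ G.edgeSet | c' e = i}).ncard ≤ eopNumber G := fun i =>
      le_csSup hbdd ⟨_, key _ c' hc' i, rfl⟩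
    set s := G.edgeSet.toFinite.toFinset with hs
    have hsum : G.edgeSet.ncard ≤ injChromIndex G * eopNumber G := by
      have h1 : G.edgeSet.ncard = s.card :=
        Set.ncard_eq_toFinset_card _ G.edgeSet.toFinite
      have h2 : s.card = ∑ i : Fin (injChromIndex G), (s.filter (fun e => c' e = i)).card :=
        Finset.card_eq_sum_card_fiberwise (fun e _ => Finset.mem_univ (c' e))
      have h3 : ∀ i, (s.filter (fun e => c' e = i)).card ≤ eopNumber G := by
        intro i
        have : ({e ∈ G.edgeSet | c' e = i}) = ↑(s.filter (fun e => c' e = i)) := by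
          ext e
          simp only [Set.mem_setOf_eq, Finset.coe_filter, hs, Set.Finite.mem_toFinset]
        calc (s.filter (fun e => c' e = i)).card
            = ({e ∈ G.edgeSet | c' e = i}).ncard := by rw [this, Set.ncard_coe_finset]
          _ ≤ eopNumber G := hle i
      calc G.edgeSet.ncard = ∑ i : Fin (injChromIndex G),
              (s.filter (fun e => c' e = i)).card := by rw [h1, h2]
        _ ≤ ∑ _i : Fin (injChromIndex G), eopNumber G :=
            Finset.sum_le_sum (fun i _ => h3 i)
        _ = injChromIndex G * eopNumber G := by simp [Finset.sum_const, Fintype.card_fin]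
    rw [div_le_iff₀ (by exact_mod_cast hpos)]
    calc (G.edgeSet.ncard : ℚ) ≤ (injChromIndex G * eopNumber G : ℕ) := by exact_mod_cast hsum
      _ = (eopNumber G : ℚ) * (injChromIndex G : ℚ) := by push_cast; ring
end

section
/- Let σ = (v_1, ..., v_n) be a bi-compatible elimination ordering of a connected proper interval graph G. If v_i v_j ∈ E(G) for some i < j, then the set {v_i, v_{i+1}, ..., v_j} induces a clique in G. -/
namespace EOP

/-- The ordering `(0, 1, …, n-1)` is a perfect elimination ordering of
`G : SimpleGraph (Fin n)`. -/
def IsPEO {n : ℕ} (G : SimpleGraph (Fin n)) : Prop :=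
  ∀ i j l : Fin n, i < j → i < l → j ≠ l → G.Adj i j → G.Adj i l → G.Adj j l

/-- The ordering `(0, 1, …, n-1)` is a bi-compatible elimination ordering of `G`:
it is a PEO and its reverse is also a PEO. -/
def IsBCO {n : ℕ} (G : SimpleGraph (Fin n)) : Prop :=
  IsPEO G ∧
  ∀ i j l : Fin n, j < i → l < i → j ≠ l → G.Adj i j → G.Adj i l → G.Adj j l

end EOP

namespace EOP

/-- Restricting to the first `m` vertices preserves being a BCO. -/
lemma isBCO_comap_castSucc {m : ℕ} (G : SimpleGraph (Fin (m+1))) (h : IsBCO G) :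
    IsBCO (SimpleGraph.comap Fin.castSucc G) := by
  constructor
  · intro i j l hij hil hjl ha hb
    exact h.1 i.castSucc j.castSucc l.castSucc (by simpa) (by simpa)
      (by simpa using hjl) ha hb
  · intro i j l hij hil hjl ha hb
    exact h.2 i.castSucc j.castSucc l.castSucc (by simpa) (by simpa)
      (by simpa using hjl) ha hb

/-- Reversing the vertex order preserves being a BCO. -/
lemma isBCO_comap_rev {n : ℕ} (G : SimpleGraph (Fin n)) (h : IsBCO G) :
    IsBCO (SimpleGraph.comap Fin.rev G) := by
  constructor
  · intro i j l hij hil hjl ha hb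
    exact h.2 i.rev j.rev l.rev (by simpa [Fin.rev_lt_rev]) (by simpa [Fin.rev_lt_rev])
      (by simpa [Fin.rev_inj] using hjl) ha hb
  · intro i j l hij hil hjl ha hb
    exact h.1 i.rev j.rev l.rev (by simpa [Fin.rev_lt_rev]) (by simpa [Fin.rev_lt_rev])
      (by simpa [Fin.rev_inj] using hjl) ha hb

/-- Reversing the vertex order preserves connectedness. -/
lemma connected_comap_rev {n : ℕ} (G : SimpleGraph (Fin n)) (h : G.Connected) :
    (SimpleGraph.comap Fin.rev G).Connected := by
  have e : SimpleGraph.comap Fin.rev G ≃g G :=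
    ⟨Fin.revPerm, Iff.rfl⟩
  exact e.connected_iff.mpr h

/-- In a graph with a BCO, the last vertex is simplicial. -/
lemma last_simplicial {m : ℕ} (G : SimpleGraph (Fin (m+1))) (h : IsBCO G) :
    ∀ j l : Fin (m+1), j ≠ l → G.Adj (Fin.last m) j → G.Adj (Fin.last m) l → G.Adj j l := by
  intro j l hjl ha hb
  have hj : (j : ℕ) ≠ m := by
    intro hc
    exact ha.ne' (Fin.ext (by simpa using hc))
  have hl : (l : ℕ) ≠ m := by
    intro hc
    exact hb.ne' (Fin.ext (by simpa using hc))
  have hj' : j < Fin.last m := by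
    rw [Fin.lt_def]; simp; omega
  have hl' : l < Fin.last m := by
    rw [Fin.lt_def]; simp; omega
  exact h.2 (Fin.last m) j l hj' hl' hjl ha hb

/-- Walks between non-last vertices can be rerouted to avoid the last (simplicial) vertex. -/
lemma reach_avoid_last {m : ℕ} (G : SimpleGraph (Fin (m+1)))
    (hsimp : ∀ j l : Fin (m+1), j ≠ l → G.Adj (Fin.last m) j → G.Adj (Fin.last m) l →
      G.Adj j l) :
    ∀ (L : ℕ) (u v : Fin (m+1)) (w : G.Walk u v), w.length ≤ L →
      ∀ (hu : u ≠ Fin.last m) (hv : v ≠ Fin.last m),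
      (SimpleGraph.comap Fin.castSucc G).Reachable (u.castPred hu) (v.castPred hv) := by
  intro L
  induction L with
  | zero =>
    intro u v w hw hu hv
    cases w with
    | nil => exact SimpleGraph.Reachable.refl _
    | cons h p => simp [SimpleGraph.Walk.length_cons] at hw
  | succ L ih =>
    intro u v w hw hu hv
    cases w with
    | nil => exact SimpleGraph.Reachable.refl _
    | @cons _ w1 _ h p =>
      by_cases h1 : w1 = Fin.last m
      · subst h1
        cases p with
        | nil => exact absurd rfl hv
        | @cons _ z _ h2 p2 =>
          have hz : z ≠ Fin.last m := h2.ne.symm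
          by_cases huz : u = z
          · subst huz
            exact ih u v p2 (by simp [SimpleGraph.Walk.length_cons] at hw ⊢; omega) hu hv
          · have hadj : G.Adj u z := hsimp u z huz h.symm h2
            exact ih u v (SimpleGraph.Walk.cons hadj p2)
              (by simp [SimpleGraph.Walk.length_cons] at hw ⊢; omega) hu hv
      · have hr : (SimpleGraph.comap Fin.castSucc G).Reachable (w1.castPred h1)
            (v.castPred hv) :=
          ih w1 v p (by simp [SimpleGraph.Walk.length_cons] at hw; omega) h1 hv
        refine (SimpleGraph.Adj.reachable ?_).trans hr
        show G.Adj ((u.castPred hu).castSucc) ((w1.castPred h1).castSucc)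
        rwa [Fin.castSucc_castPred, Fin.castSucc_castPred]

/-- Removing the last vertex of a connected graph with a BCO keeps it connected. -/
lemma connected_comap_castSucc {m : ℕ} (hm : 0 < m) (G : SimpleGraph (Fin (m+1)))
    (hG : G.Connected) (hbco : IsBCO G) :
    (SimpleGraph.comap Fin.castSucc G).Connected := by
  rw [SimpleGraph.connected_iff]
  refine ⟨fun x y => ?_, ⟨⟨0, hm⟩⟩⟩
  obtain ⟨w⟩ := hG.preconnected x.castSucc y.castSucc
  have hx : x.castSucc ≠ Fin.last m := (Fin.castSucc_lt_last x).ne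
  have hy : y.castSucc ≠ Fin.last m := (Fin.castSucc_lt_last y).ne
  have := reach_avoid_last G (last_simplicial G hbco) w.length _ _ w le_rfl hx hy
  simpa [Fin.castPred_castSucc] using this

/-- In a connected graph with a BCO, consecutive vertices are adjacent. -/
lemma consec_adj : ∀ (n : ℕ) (G : SimpleGraph (Fin n)), G.Connected → IsBCO G →
    ∀ (k : ℕ) (hk : k + 1 < n), G.Adj ⟨k, by omega⟩ ⟨k+1, hk⟩ := by
  intro n
  induction n using Nat.strong_induction_on with
  | _ n ih =>
    intro G hconn hbco k hk
    obtain ⟨m, rfl⟩ : ∃ m, n = m + 1 := ⟨n - 1, by omega⟩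
    by_cases hkm : k + 1 < m
    · -- the gap is among the first m vertices: remove the last vertex
      have h1 := isBCO_comap_castSucc G hbco
      have h2 := connected_comap_castSucc (by omega) G hconn hbco
      have h3 := ih m (by omega) _ h2 h1 k hkm
      exact h3
    · -- k + 1 = m
      have hkm' : k + 1 = m := by omega
      by_cases hm2 : m < 2
      · -- n = 2, k = 0 : extract an edge from connectivity
        have hm1 : m = 1 := by omega
        subst hm1
        have hk0 : k = 0 := by omega
        subst hk0
        obtain ⟨w⟩ := hconn.preconnected ⟨0, by omega⟩ ⟨1, hk⟩
        cases w with
        | @cons _ z _ h p =>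
          have hz : z = ⟨1, hk⟩ := by
            have h0 : (z : ℕ) ≠ 0 := by
              intro hc
              exact h.ne' (Fin.ext (by simpa using hc))
            have h2 : (z : ℕ) < 1 + 1 := z.isLt
            exact Fin.ext (show (z : ℕ) = 1 by omega)
          rwa [hz] at h
      · -- m ≥ 2 : reverse the graph, the gap becomes the bottom gap 0–1
        set Gr := SimpleGraph.comap Fin.rev G with hGr
        have hrcon : Gr.Connected := connected_comap_rev G hconn
        have hrbco : IsBCO Gr := isBCO_comap_rev G hbco
        have h1 := isBCO_comap_castSucc Gr hrbco
        have h2 := connected_comap_castSucc (by omega) Gr hrcon hrbco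
        have h3 := ih m (by omega) _ h2 h1 0 (by omega)
        have h4 : Gr.Adj ⟨0, by omega⟩ ⟨1, by omega⟩ := h3
        have h5 : G.Adj (Fin.rev (⟨0, by omega⟩ : Fin (m+1)))
            (Fin.rev (⟨1, by omega⟩ : Fin (m+1))) := h4
        have e0 : Fin.rev (⟨0, by omega⟩ : Fin (m+1)) = ⟨k+1, hk⟩ := by
          apply Fin.ext
          simp [Fin.val_rev]
          omega
        have e1 : Fin.rev (⟨1, by omega⟩ : Fin (m+1)) = ⟨k, by omega⟩ := by
          apply Fin.ext
          simp [Fin.val_rev]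
          omega
        rw [e0, e1] at h5
        exact h5.symm

end EOP

open EOP in
/-- If `(v_1, …, v_n)` is a BCO of a connected proper interval graph `G` and
`v_i v_j ∈ E(G)` with `i < j`, then `{v_i, …, v_j}` induces a clique in `G`. -/
theorem stmt_6 {n : ℕ} (G : SimpleGraph (Fin n)) (hconn : G.Connected)
    (hbco : IsBCO G) (i j : Fin n) (hij : i < j) (hadj : G.Adj i j) :
    G.IsClique {m : Fin n | i ≤ m ∧ m ≤ j} := by
  have hcons : ∀ (k : ℕ) (hk : k + 1 < n), G.Adj ⟨k, by omega⟩ ⟨k+1, hk⟩ :=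
    consec_adj n G hconn hbco
  -- every x with i ≤ x < j is adjacent to j
  have step1 : ∀ (x : ℕ) (hx : (i : ℕ) ≤ x) (hxj : x < (j : ℕ)),
      G.Adj ⟨x, by omega⟩ j := by
    intro x hx
    induction x, hx using Nat.le_induction with
    | base => intro hxj; exact hadj
    | succ x hx ihx =>
      intro hxj
      have h1 : G.Adj ⟨x, by omega⟩ j := ihx (by omega)
      have h2 : G.Adj ⟨x, by omega⟩ ⟨x+1, by omega⟩ := hcons x (by omega)
      refine hbco.1 ⟨x, by omega⟩ ⟨x+1, by omega⟩ j ?_ ?_ ?_ h2 h1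
      · rw [Fin.lt_def]; simp
      · rw [Fin.lt_def]; simpa using by omega
      · intro hc
        have : x + 1 = (j : ℕ) := by simpa [Fin.ext_iff] using hc
        omega
  intro a ha b hb hab
  simp only [Set.mem_setOf_eq] at ha hb
  rcases lt_or_gt_of_ne hab with h | h
  · -- a < b
    have haj : G.Adj ⟨(a : ℕ), a.isLt⟩ j := step1 a (by exact_mod_cast ha.1) (by
      rcases lt_or_eq_of_le hb.2 with h' | h'
      · exact_mod_cast lt_of_lt_of_le h hb.2
      · exact_mod_cast lt_of_lt_of_le h hb.2)
    have haj' : G.Adj a j := by simpa using haj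
    rcases eq_or_lt_of_le hb.2 with h' | h'
    · rw [h']; exact haj'
    · have hbj : G.Adj ⟨(b : ℕ), b.isLt⟩ j := step1 b (le_trans ha.1 h.le) h'
      have hbj' : G.Adj b j := by simpa using hbj
      exact hbco.2 j a b (lt_of_lt_of_le h hb.2) h' hab haj'.symm hbj'.symm
  · -- b < a : symmetric
    have hbj : G.Adj ⟨(b : ℕ), b.isLt⟩ j := step1 b hb.1 (lt_of_lt_of_le h ha.2)
    have hbj' : G.Adj b j := by simpa using hbj
    rcases eq_or_lt_of_le ha.2 with h' | h'
    · rw [h']; exact hbj'.symm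
    · have haj : G.Adj ⟨(a : ℕ), a.isLt⟩ j := step1 a ha.1 h'
      have haj' : G.Adj a j := by simpa using haj
      exact hbco.2 j b a (lt_of_lt_of_le h ha.2) h' hab.symm hbj'.symm haj'.symm |>.symm
end

section
/- Let G be a connected proper interval graph with BCO σ = (v_1,...,v_n), let k be the largest index with v_1 v_k ∈ E(G) (or k = 1 if v_1 has no such neighbor). Then the maximum size of an edge open packing set S of G in which v_1 is not an endpoint of any edge of S equals the edge open packing number of the induced subgraph G[{v_2,...,v_n}]. -/
open EOP in
/-- For a connected proper interval graph `G` with BCO `(v_1, …, v_n)`, the maximum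
size of an edge open packing set in which `v_1` is not an endpoint of any edge equals
the edge open packing number of `G[{v_2, …, v_n}]`. -/
theorem stmt_7 {n : ℕ} [NeZero n] (G : SimpleGraph (Fin n)) (hconn : G.Connected)
    (hbco : IsBCO G) :
    sSup {m | ∃ D : Set (Sym2 (Fin n)), IsEOPSet G D ∧
        (∀ e ∈ D, (0 : Fin n) ∉ e) ∧ D.ncard = m}
      = eopNumber (G.induce {w : Fin n | w ≠ 0}) := by
  classical
  set S : Set (Fin n) := {w : Fin n | w ≠ 0} with hS
  set f : Sym2 S → Sym2 (Fin n) := Sym2.map (Subtype.val) with hf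
  have hinj : Function.Injective f := Sym2.map.injective Subtype.val_injective
  have hmem : ∀ (e : Sym2 S) (x : Fin n), x ∈ f e ↔ ∃ x' : S, x' ∈ e ∧ (x' : Fin n) = x := by
    intro e x
    simp [hf, Sym2.mem_map]
  have hce : ∀ e₁ e₂ : Sym2 S,
      HasCommonEdge (G.induce S) e₁ e₂ ↔ HasCommonEdge G (f e₁) (f e₂) := by
    intro e₁ e₂
    constructor
    · rintro ⟨a, b, hab, hne1, hne2, ha, hb⟩
      refine ⟨a, b, hab, ?_, ?_, ?_, ?_⟩
      · intro h
        apply hne1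
        apply hinj
        rw [hf, Sym2.map_pair_eq]; exact h
      · intro h
        apply hne2
        apply hinj
        rw [hf, Sym2.map_pair_eq]; exact h
      · exact (hmem e₁ a).2 ⟨a, ha, rfl⟩
      · exact (hmem e₂ b).2 ⟨b, hb, rfl⟩
    · rintro ⟨a, b, hab, hne1, hne2, ha, hb⟩
      obtain ⟨a', ha', rfl⟩ := (hmem e₁ a).1 ha
      obtain ⟨b', hb', rfl⟩ := (hmem e₂ b).1 hb
      refine ⟨a', b', hab, ?_, ?_, ha', hb'⟩
      · intro h
        apply hne1
        rw [← h, hf, Sym2.map_pair_eq]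
      · intro h
        apply hne2
        rw [← h, hf, Sym2.map_pair_eq]
  unfold eopNumber
  congr 1
  ext m
  simp only [Set.mem_setOf_eq]
  constructor
  · rintro ⟨D, ⟨hDsub, hDpack⟩, hD0, rfl⟩
    have hrange : D ⊆ Set.range f := by
      intro e he
      induction e using Sym2.ind with
      | _ x y =>
        have hadj : G.Adj x y := hDsub he
        have hx : x ≠ 0 := fun h => hD0 _ he (h ▸ Sym2.mem_mk_left x y)
        have hy : y ≠ 0 := fun h => hD0 _ he (h ▸ Sym2.mem_mk_right x y)
        exact ⟨s(⟨x, hx⟩, ⟨y, hy⟩), by rw [hf, Sym2.map_pair_eq]⟩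
    have himg : f '' (f ⁻¹' D) = D := Set.image_preimage_eq_iff.2 hrange
    refine ⟨f ⁻¹' D, ⟨?_, ?_⟩, ?_⟩
    · intro e he
      induction e using Sym2.ind with
      | _ x y =>
        have : f s(x, y) ∈ D := he
        have hadj : G.Adj (x : Fin n) (y : Fin n) := by
          have := hDsub this
          rw [hf, Sym2.map_pair_eq] at this
          exact this
        exact hadj
    · intro e₁ h₁ e₂ h₂ hne hc
      exact hDpack (f e₁) h₁ (f e₂) h₂ (fun h => hne (hinj h)) ((hce e₁ e₂).1 hc)
    · rw [← Set.ncard_image_of_injective (f ⁻¹' D) hinj, himg]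
  · rintro ⟨D', ⟨hDsub, hDpack⟩, rfl⟩
    refine ⟨f '' D', ⟨?_, ?_⟩, ?_, ?_⟩
    · rintro e ⟨e', he', rfl⟩
      induction e' using Sym2.ind with
      | _ x y =>
        have hadj : (G.induce S).Adj x y := hDsub he'
        have : G.Adj (x : Fin n) (y : Fin n) := hadj
        rw [hf, Sym2.map_pair_eq]
        exact this
    · rintro e₁ ⟨a₁, ha₁, rfl⟩ e₂ ⟨a₂, ha₂, rfl⟩ hne hc
      exact hDpack a₁ ha₁ a₂ ha₂ (fun h => hne (by rw [h])) ((hce a₁ a₂).2 hc)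
    · rintro e ⟨e', he', rfl⟩ h0
      obtain ⟨x', hx', hx0⟩ := (hmem e' 0).1 h0
      exact x'.2 hx0
    · exact Set.ncard_image_of_injective _ hinj
end

section
/- Let G be a connected proper interval graph with BCO σ = (v_1,...,v_n), let k = max{i : v_1 v_i ∈ E(G)} with k > 1, and for each vertex v_j let l(v_j) = max({j} ∪ {r > j : v_j v_r ∈ E(G)}). Then the maximum size of an edge open packing set S containing an edge v_1 v_j for some 1 < j ≤ k and containing no edge v_j v_p with k < p ≤ l(v_j) equals 1 + max over 1 < j ≤ k of ρ_e^o(G[{v_{l(v_j)+1}, ..., v_n}]). -/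
namespace EOP

open SimpleGraph

variable {n : ℕ} {G : SimpleGraph (Fin n)}

/-- In a BCO, the middle vertex of a locally shortest walk lies strictly between
its neighbours in the ordering. -/
lemma mono_aux (hbco : IsBCO G) :
    ∀ (N : ℕ) {a b u : Fin n} (h : G.Adj a u) (w' : G.Walk u b),
      (SimpleGraph.Walk.cons h w').length = G.dist a b →
      (SimpleGraph.Walk.cons h w').length ≤ N →
      (a < b → a < u ∧ u ≤ b) ∧ (b < a → b ≤ u ∧ u < a) := by
  intro N
  induction N with
  | zero =>
    intro a b u h w' hlen hle
    simp [SimpleGraph.Walk.length_cons] at hle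
  | succ N ih =>
    intro a b u h w' hlen hle
    cases w' with
    | nil =>
      exact ⟨fun hab => ⟨hab, le_refl _⟩, fun hba => ⟨le_refl _, hba⟩⟩
    | @cons _ v _ h' w'' =>
      simp only [SimpleGraph.Walk.length_cons] at hlen hle
      have hnav : ¬ G.Adj a v := by
        intro hav
        have := G.dist_le (SimpleGraph.Walk.cons hav w'')
        simp [SimpleGraph.Walk.length_cons] at this
        omega
      have hanv : a ≠ v := by
        intro he
        have := G.dist_le (w''.copy he.symm rfl)
        simp [SimpleGraph.Walk.length_copy] at this
        omega
      have hstep : (a < u ∧ u < v) ∨ (v < u ∧ u < a) := by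
        rcases lt_trichotomy a u with hau | hau | hau
        · rcases lt_trichotomy u v with huv | huv | huv
          · exact Or.inl ⟨hau, huv⟩
          · exact absurd huv h'.ne
          · exact absurd (hbco.2 u a v hau huv hanv h.symm h') hnav
        · exact absurd hau h.ne
        · rcases lt_trichotomy u v with huv | huv | huv
          · exact absurd (hbco.1 u a v hau huv hanv h.symm h') hnav
          · exact absurd huv h'.ne
          · exact Or.inr ⟨huv, hau⟩
      have hdub : G.dist u b = w''.length + 1 := by
        have h1 : G.dist u b ≤ w''.length + 1 := by
          have := G.dist_le (SimpleGraph.Walk.cons h' w'')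
          simpa [SimpleGraph.Walk.length_cons] using this
        have h2 : w''.length + 1 ≤ G.dist u b := by
          obtain ⟨p, hp⟩ :=
            (SimpleGraph.Walk.reachable (SimpleGraph.Walk.cons h' w'')).exists_walk_length_eq_dist
          have := G.dist_le (SimpleGraph.Walk.cons h p)
          simp [SimpleGraph.Walk.length_cons] at this
          omega
        omega
      have hub : u ≠ b := by
        intro he
        subst he
        rw [SimpleGraph.dist_self] at hdub
        omega
      have IH2 := ih h' w'' (by simp [SimpleGraph.Walk.length_cons]; omega)
        (by simp [SimpleGraph.Walk.length_cons]; omega)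
      constructor
      · intro hab
        rcases hstep with ⟨hau, huv⟩ | ⟨hvu, hua⟩
        · refine ⟨hau, ?_⟩
          rcases lt_trichotomy u b with h1 | h1 | h1
          · exact le_of_lt h1
          · exact le_of_eq h1
          · exact absurd (IH2.2 h1).2 (not_lt.mpr (le_of_lt huv))
        · have hub' : u < b := lt_trans hua hab
          exact absurd (IH2.1 hub').1 (not_lt.mpr (le_of_lt hvu))
      · intro hba
        rcases hstep with ⟨hau, huv⟩ | ⟨hvu, hua⟩
        · have hbu : b < u := lt_trans hba hau
          exact absurd (IH2.2 hbu).2 (not_lt.mpr (le_of_lt huv))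
        · refine ⟨?_, hua⟩
          rcases lt_trichotomy u b with h1 | h1 | h1
          · exact absurd (IH2.1 h1).1 (not_lt.mpr (le_of_lt hvu))
          · exact le_of_eq h1.symm
          · exact le_of_lt h1

/-- In a connected graph with a BCO, consecutive vertices are adjacent. -/
lemma consec (hconn : G.Connected) (hbco : IsBCO G) (t : Fin n) (ht : (t : ℕ) + 1 < n) :
    G.Adj t ⟨(t : ℕ) + 1, ht⟩ := by
  suffices aux : ∀ b : Fin n, (b : ℕ) = (t : ℕ) + 1 → G.Adj t b by exact aux _ rfl
  intro b hbv
  have hne : t ≠ b := by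
    intro he
    have : (t : ℕ) = (b : ℕ) := congrArg Fin.val he
    omega
  obtain ⟨w, hw⟩ := (hconn t b).exists_walk_length_eq_dist
  cases w with
  | nil => exact absurd rfl hne
  | @cons _ u _ h w' =>
    have htb : t < b := by rw [Fin.lt_def]; omega
    obtain ⟨hu1, hu2⟩ := (mono_aux hbco ((SimpleGraph.Walk.cons h w').length) h w' hw le_rfl).1 htb
    have : u = b := by
      apply le_antisymm hu2
      rw [Fin.le_def]
      rw [Fin.lt_def] at hu1
      omega
    rwa [this] at h

lemma adj_of_le (hconn : G.Connected) (hbco : IsBCO G) :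
    ∀ (d : ℕ) (x y m : Fin n), G.Adj x y → x < m → m ≤ y → (y : ℕ) - (m : ℕ) = d →
      G.Adj x m := by
  intro d
  induction d with
  | zero =>
    intro x y m hxy hxm hmy hd
    have : m = y := by
      have := Fin.le_def.mp hmy
      exact Fin.ext (by omega)
    rwa [this]
  | succ d ihd =>
    intro x y m hxy hxm hmy hd
    have hmy' : (m : ℕ) < (y : ℕ) := by
      have := Fin.le_def.mp hmy; omega
    have hm1 : (m : ℕ) + 1 < n := lt_of_le_of_lt hmy' y.isLt
    set m1 : Fin n := ⟨(m : ℕ) + 1, hm1⟩ with hm1def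
    have hxm1 : x < m1 := by
      rw [Fin.lt_def] at hxm ⊢; simp [hm1def]; omega
    have hm1y : m1 ≤ y := by
      rw [Fin.le_def]; simp [hm1def]; omega
    have hadj1 : G.Adj x m1 := ihd x y m1 hxy hxm1 hm1y (by simp [hm1def]; omega)
    have hadj2 : G.Adj m m1 := consec hconn hbco m hm1
    exact hbco.2 m1 x m hxm1 (by rw [Fin.lt_def]; simp [hm1def]) (ne_of_lt hxm)
      hadj1.symm hadj2.symm

/-- Interval clique property: any two vertices between the ends of an edge are adjacent. -/
lemma interval_clique (hconn : G.Connected) (hbco : IsBCO G) {x y p q : Fin n}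
    (hxy : G.Adj x y) (hxp : x ≤ p) (hpq : p < q) (hqy : q ≤ y) : G.Adj p q := by
  have hq : G.Adj x q := adj_of_le hconn hbco _ x y q hxy (lt_of_le_of_lt hxp hpq) hqy rfl
  rcases eq_or_lt_of_le hxp with rfl | hxp'
  · exact hq
  · have hp : G.Adj x p :=
      adj_of_le hconn hbco _ x y p hxy hxp' (le_of_lt (lt_of_lt_of_le hpq hqy)) rfl
    exact hbco.1 x p q hxp' (lt_of_le_of_lt hxp hpq) (ne_of_lt hpq) hp hq

lemma fin_pos {m : ℕ} [NeZero m] {a : Fin m} (h : a ≠ 0) : 0 < a := by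
  have hv : (a : ℕ) ≠ 0 := fun hh => h (Fin.ext (by rw [Fin.val_zero m]; exact hh))
  show ((0 : Fin m) : ℕ) < a
  rw [Fin.val_zero m]
  omega

lemma eop_bddAbove {W : Type*} [Finite W] (H : SimpleGraph W) :
    BddAbove {m | ∃ D : Set (Sym2 W), IsEOPSet H D ∧ D.ncard = m} := by
  refine ⟨Nat.card (Sym2 W), ?_⟩
  rintro m ⟨D, _, rfl⟩
  rw [← Set.ncard_univ]
  exact Set.ncard_le_ncard (Set.subset_univ _) Set.finite_univ

lemma le_eopNumber {W : Type*} [Finite W] {H : SimpleGraph W} {D : Set (Sym2 W)}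
    (h : IsEOPSet H D) : D.ncard ≤ eopNumber H :=
  le_csSup (eop_bddAbove H) ⟨D, h, rfl⟩

lemma exists_eop_max {W : Type*} [Finite W] (H : SimpleGraph W) :
    ∃ D : Set (Sym2 W), IsEOPSet H D ∧ D.ncard = eopNumber H := by
  have hne : {m | ∃ D : Set (Sym2 W), IsEOPSet H D ∧ D.ncard = m}.Nonempty :=
    ⟨0, ∅, ⟨Set.empty_subset _, fun e₁ h => absurd h (Set.notMem_empty _)⟩, by simp⟩
  exact Nat.sSup_mem hne (eop_bddAbove H)

end EOP

open EOP in
/-- For a connected proper interval graph `G` with BCO `(v_1, …, v_n)`,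
`k = max{i : v_1 v_i ∈ E(G)} > 1` and `l(v_j) = max({j} ∪ {r > j : v_j v_r ∈ E(G)})`:
the maximum size of an EOP set containing an edge `v_1 v_j` for some `1 < j ≤ k`
and no edge `v_j v_p` with `k < p ≤ l(v_j)` equals
`1 + max_{1 < j ≤ k} ρ_e^o(G[{v_{l(v_j)+1}, …, v_n}])`. -/
theorem stmt_8 {n : ℕ} [NeZero n] (G : SimpleGraph (Fin n)) (hconn : G.Connected)
    (hbco : IsBCO G) (k : Fin n)
    (hkadj : G.Adj 0 k) (hkmax : ∀ i : Fin n, G.Adj 0 i → i ≤ k)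
    (hk1 : 1 < (k : ℕ))
    (l : Fin n → Fin n)
    (hl₁ : ∀ j : Fin n, j ≤ l j)
    (hl₂ : ∀ j : Fin n, l j = j ∨ G.Adj j (l j))
    (hl₃ : ∀ j r : Fin n, j < r → G.Adj j r → r ≤ l j) :
    sSup {m | ∃ (D : Set (Sym2 (Fin n))) (j : Fin n), IsEOPSet G D ∧
        0 < j ∧ j ≤ k ∧ s((0 : Fin n), j) ∈ D ∧
        (∀ p : Fin n, k < p → p ≤ l j → s(j, p) ∉ D) ∧ D.ncard = m}
      = 1 + sSup {m | ∃ j : Fin n, 0 < j ∧ j ≤ k ∧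
          m = eopNumber (G.induce {w : Fin n | l j < w})} := by
  classical
  have hk0 : (0 : Fin n) < k := by
    show ((0 : Fin n) : ℕ) < k
    rw [Fin.val_zero n]; omega
  have adj0 : ∀ m : Fin n, (0 : Fin n) < m → m ≤ k → G.Adj 0 m := by
    intro m h0 hk'
    exact interval_clique hconn hbco hkadj (le_refl 0) h0 hk'
  have adjj : ∀ (j m : Fin n), (0 : Fin n) < j → j ≤ k → m ≠ j → m ≤ l j → G.Adj j m := by
    intro j m hj0 hjk hmj hml
    rcases lt_or_gt_of_ne hmj with hlt | hgt
    · exact (interval_clique hconn hbco hkadj (Fin.zero_le m) hlt hjk).symm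
    · have hlj : l j ≠ j := by
        intro he; rw [he] at hml; exact absurd hml (not_le.mpr hgt)
      exact interval_clique hconn hbco ((hl₂ j).resolve_left hlj) (le_refl j) hgt hml
  have hkle : ∀ j : Fin n, (0 : Fin n) < j → j ≤ k → k ≤ l j := by
    intro j hj0 hjk
    rcases eq_or_lt_of_le hjk with rfl | hlt
    · exact hl₁ j
    · exact hl₃ j k hlt (interval_clique hconn hbco hkadj (Fin.zero_le j) hlt (le_refl k))
  have hinj : ∀ j : Fin n,
      Function.Injective (Sym2.map (Subtype.val : {w : Fin n | l j < w} → Fin n)) :=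
    fun _ => Sym2.map.injective Subtype.val_injective
  -- no common edge between s(0,j) and an edge with both endpoints above l j
  have hno : ∀ j : Fin n, (0 : Fin n) < j → j ≤ k → ∀ e₂ : Sym2 (Fin n),
      (∀ x ∈ e₂, l j < x) →
      ¬ HasCommonEdge G s((0 : Fin n), j) e₂ ∧ ¬ HasCommonEdge G e₂ s((0 : Fin n), j) := by
    intro j hj0 hjk e₂ hhigh
    have main : ∀ a b : Fin n, G.Adj a b → a ∈ (s((0 : Fin n), j) : Sym2 (Fin n)) →
        l j < b → False := by
      intro a b hab ha hb
      rcases Sym2.mem_iff.mp ha with rfl | rfl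
      · exact absurd hb (not_lt.mpr (le_trans (hkmax b hab) (hkle j hj0 hjk)))
      · exact absurd (hl₃ a b (lt_of_le_of_lt (hl₁ a) hb) hab) (not_le.mpr hb)
    constructor
    · rintro ⟨a, b, hab, -, -, ha, hb⟩
      exact main a b hab ha (hhigh b hb)
    · rintro ⟨a, b, hab, -, -, ha, hb⟩
      exact main b a hab.symm hb (hhigh a ha)
  -- every edge of a good EOP set other than s(0,j) has endpoints above l j
  have key : ∀ (D : Set (Sym2 (Fin n))) (j : Fin n), IsEOPSet G D → (0 : Fin n) < j → j ≤ k →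
      s((0 : Fin n), j) ∈ D → (∀ p : Fin n, k < p → p ≤ l j → s(j, p) ∉ D) →
      ∀ a b : Fin n, s(a, b) ∈ D → s(a, b) ≠ s((0 : Fin n), j) → l j < a := by
    intro D j hEOP hj0 hjk hmem hforb a b hab hne
    by_contra hle
    push_neg at hle
    have hadj : G.Adj a b := (G.mem_edgeSet).mp (hEOP.1 hab)
    -- edges containing j are impossible
    have hjcase : ∀ c : Fin n, s(j, c) ∈ D → s(j, c) ≠ s((0 : Fin n), j) → False := by
      intro c hcD hcne
      have hadjc : G.Adj j c := (G.mem_edgeSet).mp (hEOP.1 hcD)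
      have hcj : c ≠ j := hadjc.ne'
      have hc0 : c ≠ 0 := by
        rintro rfl
        exact hcne (Sym2.eq_swap)
      have hcl : c ≤ l j := by
        rcases lt_or_gt_of_ne hcj with h | h
        · exact le_trans (le_of_lt h) (hl₁ j)
        · exact hl₃ j c h hadjc
      rcases le_or_gt c k with hck | hkc
      · have hadj0c : G.Adj 0 c := adj0 c (fin_pos hc0) hck
        refine hEOP.2 _ hmem _ hcD (Ne.symm hcne) ⟨0, c, hadj0c, ?_, ?_, by simp, by simp⟩
        · intro h
          rcases Sym2.eq_iff.mp h with ⟨-, h2⟩ | ⟨h1, -⟩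
          · exact hcj h2
          · exact hj0.ne h1
        · intro h
          rcases Sym2.eq_iff.mp h with ⟨h1, -⟩ | ⟨h1, -⟩
          · exact hj0.ne h1
          · exact hc0 h1.symm
      · exact hforb c hkc hcl hcD
    rcases eq_or_ne a j with rfl | hja
    · exact hjcase b hab hne
    rcases eq_or_ne b j with rfl | hjb
    · have hab' : s(b, a) ∈ D := by rwa [Sym2.eq_swap] at hab
      have hne' : s(b, a) ≠ s((0 : Fin n), b) := by rwa [Sym2.eq_swap] at hne
      exact hjcase a hab' hne'
    -- edges containing 0 (but not j) are impossible
    have h0case : ∀ c : Fin n, s((0 : Fin n), c) ∈ D → c ≠ j → c ≠ 0 → False := by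
      intro c hcD hcj hc0
      have hadjc : G.Adj 0 c := (G.mem_edgeSet).mp (hEOP.1 hcD)
      have hadjjc : G.Adj j c :=
        adjj j c hj0 hjk hcj (le_trans (hkmax c hadjc) (hkle j hj0 hjk))
      have hne' : s((0 : Fin n), c) ≠ s((0 : Fin n), j) := by
        intro h
        rcases Sym2.eq_iff.mp h with ⟨-, h2⟩ | ⟨h1, -⟩
        · exact hcj h2
        · exact hj0.ne h1
      refine hEOP.2 _ hmem _ hcD (Ne.symm hne') ⟨j, c, hadjjc, ?_, ?_, by simp, by simp⟩
      · intro h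
        rcases Sym2.eq_iff.mp h with ⟨h1, -⟩ | ⟨-, h2⟩
        · exact hj0.ne h1.symm
        · exact hc0 h2
      · intro h
        rcases Sym2.eq_iff.mp h with ⟨h1, -⟩ | ⟨-, h2⟩
        · exact hj0.ne h1.symm
        · exact hc0 h2
    rcases eq_or_ne a 0 with rfl | ha0
    · exact h0case b hab hjb hadj.ne'
    rcases eq_or_ne b 0 with rfl | hb0
    · have hab' : s((0 : Fin n), a) ∈ D := by rwa [Sym2.eq_swap] at hab
      exact h0case a hab' hja hadj.ne
    -- generic case: common edge s(j, a)
    have hadjja : G.Adj j a := adjj j a hj0 hjk hja hle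
    refine hEOP.2 _ hmem _ hab (Ne.symm hne) ⟨j, a, hadjja, ?_, ?_, by simp, by simp⟩
    · intro h
      rcases Sym2.eq_iff.mp h with ⟨h1, -⟩ | ⟨-, h2⟩
      · exact hj0.ne h1.symm
      · exact ha0 h2
    · intro h
      rcases Sym2.eq_iff.mp h with ⟨h1, -⟩ | ⟨h1, -⟩
      · exact hja h1.symm
      · exact hjb h1.symm
  set B := {m | ∃ j : Fin n, 0 < j ∧ j ≤ k ∧
      m = eopNumber (G.induce {w : Fin n | l j < w})} with hBdef
  set A := {m | ∃ (D : Set (Sym2 (Fin n))) (j : Fin n), IsEOPSet G D ∧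
      0 < j ∧ j ≤ k ∧ s((0 : Fin n), j) ∈ D ∧
      (∀ p : Fin n, k < p → p ≤ l j → s(j, p) ∉ D) ∧ D.ncard = m} with hAdef
  have hbddA : BddAbove A := by
    refine ⟨Nat.card (Sym2 (Fin n)), ?_⟩
    rintro m ⟨D, j, -, -, -, -, -, rfl⟩
    rw [← Set.ncard_univ]
    exact Set.ncard_le_ncard (Set.subset_univ _) Set.finite_univ
  have hbddB : BddAbove B := by
    have hsub : B ⊆ (fun j : Fin n => eopNumber (G.induce {w : Fin n | l j < w})) '' Set.univ := by
      rintro m ⟨j, -, -, rfl⟩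
      exact ⟨j, trivial, rfl⟩
    exact BddAbove.mono hsub ((Set.finite_univ.image _).bddAbove)
  have hAne : (1 : ℕ) ∈ A := by
    refine ⟨{s((0 : Fin n), k)}, k, ⟨?_, ?_⟩, hk0, le_refl k, Set.mem_singleton _, ?_,
      Set.ncard_singleton _⟩
    · intro e he
      rw [Set.mem_singleton_iff] at he
      subst he
      exact (SimpleGraph.mem_edgeSet _).mpr hkadj
    · intro e₁ h1 e₂ h2 hne
      rw [Set.mem_singleton_iff] at h1 h2
      exact absurd (h1.trans h2.symm) hne
    · intro p hkp hpl hmem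
      rw [Set.mem_singleton_iff] at hmem
      rcases Sym2.eq_iff.mp hmem with ⟨h1, -⟩ | ⟨-, h2⟩
      · exact hk0.ne' h1
      · exact (lt_trans hk0 hkp).ne' h2
  apply le_antisymm
  · apply csSup_le ⟨1, hAne⟩
    rintro m ⟨D, j, hEOP, hj0, hjk, hmem, hforb, rfl⟩
    have key2 : ∀ a b : Fin n, s(a, b) ∈ D → s(a, b) ≠ s((0 : Fin n), j) →
        l j < a ∧ l j < b := by
      intro a b he hne
      refine ⟨key D j hEOP hj0 hjk hmem hforb a b he hne,
        key D j hEOP hj0 hjk hmem hforb b a ?_ ?_⟩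
      · rwa [Sym2.eq_swap] at he
      · rwa [Sym2.eq_swap] at hne
    set S : Set (Fin n) := {w : Fin n | l j < w} with hS
    set D'' : Set (Sym2 S) :=
      (Sym2.map (Subtype.val : S → Fin n)) ⁻¹' (D \ {s((0 : Fin n), j)}) with hD''
    have himg : Sym2.map (Subtype.val : S → Fin n) '' D'' = D \ {s((0 : Fin n), j)} := by
      rw [hD'']
      apply Set.image_preimage_eq_of_subset
      intro e
      induction e using Sym2.ind with
      | _ a b =>
        rintro ⟨he1, he2⟩
        rw [Set.mem_singleton_iff] at he2
        obtain ⟨h1, h2⟩ := key2 a b he1 he2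
        exact ⟨s(⟨a, h1⟩, ⟨b, h2⟩), Sym2.map_pair_eq _ _ _⟩
    have hEOPD'' : IsEOPSet (G.induce S) D'' := by
      constructor
      · intro e
        induction e using Sym2.ind with
        | _ x y =>
          intro he
          have heD : Sym2.map (Subtype.val : S → Fin n) s(x, y) ∈ D := he.1
          rw [Sym2.map_pair_eq] at heD
          exact (SimpleGraph.mem_edgeSet _).mpr ((G.mem_edgeSet).mp (hEOP.1 heD))
      · intro e₁ h1 e₂ h2 hne hce
        obtain ⟨x, y, hxy, hne1, hne2, hx, hy⟩ := hce
        have hG : HasCommonEdge G (Sym2.map (Subtype.val : S → Fin n) e₁)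
            (Sym2.map (Subtype.val : S → Fin n) e₂) := by
          refine ⟨↑x, ↑y, hxy, ?_, ?_, Sym2.mem_map.mpr ⟨x, hx, rfl⟩,
            Sym2.mem_map.mpr ⟨y, hy, rfl⟩⟩
          · intro h
            apply hne1
            apply hinj j
            rw [Sym2.map_pair_eq]
            exact h
          · intro h
            apply hne2
            apply hinj j
            rw [Sym2.map_pair_eq]
            exact h
        exact hEOP.2 _ h1.1 _ h2.1 (fun h => hne (hinj j h)) hG
    have h1c : (D \ {s((0 : Fin n), j)}).ncard + 1 = D.ncard :=
      Set.ncard_diff_singleton_add_one hmem (Set.toFinite D)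
    have h2c : D''.ncard = (D \ {s((0 : Fin n), j)}).ncard := by
      rw [← himg, Set.ncard_image_of_injective _ (hinj j)]
    have h3c : D''.ncard ≤ eopNumber (G.induce S) := le_eopNumber hEOPD''
    have h4c : eopNumber (G.induce S) ≤ sSup B := by
      apply le_csSup hbddB
      exact ⟨j, hj0, hjk, by rw [hS]⟩
    omega
  · have hBne : B.Nonempty := ⟨_, k, hk0, le_refl k, rfl⟩
    obtain ⟨j, hj0, hjk, hBj⟩ := Nat.sSup_mem hBne hbddB
    obtain ⟨D'', hEOPD'', hcard⟩ := exists_eop_max (G.induce {w : Fin n | l j < w})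
    apply le_csSup hbddA
    have hhigh : ∀ e ∈ Sym2.map (Subtype.val : {w : Fin n | l j < w} → Fin n) '' D'',
        ∀ x ∈ e, l j < x := by
      rintro e ⟨e', he', rfl⟩ x hx
      obtain ⟨y, hy, rfl⟩ := Sym2.mem_map.mp hx
      exact y.2
    refine ⟨insert s((0 : Fin n), j)
      (Sym2.map (Subtype.val : {w : Fin n | l j < w} → Fin n) '' D''),
      j, ⟨?_, ?_⟩, hj0, hjk, Set.mem_insert _ _, ?_, ?_⟩
    · intro e he
      rcases Set.mem_insert_iff.mp he with rfl | hein
      · exact (SimpleGraph.mem_edgeSet _).mpr (adj0 j hj0 hjk)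
      · obtain ⟨e', he', rfl⟩ := hein
        revert he'
        induction e' using Sym2.ind with
        | _ x y =>
          intro he'
          rw [Sym2.map_pair_eq]
          exact (SimpleGraph.mem_edgeSet _).mpr
            (((SimpleGraph.mem_edgeSet _).mp (hEOPD''.1 he') : G.Adj ↑x ↑y))
    · intro e₁ h1 e₂ h2 hne
      rcases Set.mem_insert_iff.mp h1 with rfl | h1'
      · rcases Set.mem_insert_iff.mp h2 with rfl | h2'
        · exact absurd rfl hne
        · exact (hno j hj0 hjk e₂ (hhigh e₂ h2')).1
      · rcases Set.mem_insert_iff.mp h2 with rfl | h2'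
        · exact (hno j hj0 hjk e₁ (hhigh e₁ h1')).2
        · obtain ⟨e₁', he₁', rfl⟩ := h1'
          obtain ⟨e₂', he₂', rfl⟩ := h2'
          rintro ⟨a, b, hab, hne1, hne2, ha, hb⟩
          obtain ⟨x, hx, rfl⟩ := Sym2.mem_map.mp ha
          obtain ⟨y, hy, rfl⟩ := Sym2.mem_map.mp hb
          refine hEOPD''.2 e₁' he₁' e₂' he₂' (fun h => hne (by rw [h]))
            ⟨x, y, hab, ?_, ?_, hx, hy⟩
          · intro h
            apply hne1
            rw [← h, Sym2.map_pair_eq]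
          · intro h
            apply hne2
            rw [← h, Sym2.map_pair_eq]
    · intro p hkp hpl hmemD
      rcases Set.mem_insert_iff.mp hmemD with heq | himg'
      · rcases Sym2.eq_iff.mp heq with ⟨h1, -⟩ | ⟨-, h2⟩
        · exact hj0.ne' h1
        · exact (lt_trans hk0 hkp).ne' h2
      · obtain ⟨e', he', hmap⟩ := himg'
        have hjmem : j ∈ Sym2.map (Subtype.val : {w : Fin n | l j < w} → Fin n) e' := by
          rw [hmap]
          simp
        obtain ⟨y, hy, hyv⟩ := Sym2.mem_map.mp hjmem
        have hylt : l j < ↑y := y.2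
        rw [hyv] at hylt
        exact absurd hylt (not_lt.mpr (hl₁ j))
    · have hnotmem : s((0 : Fin n), j) ∉
          Sym2.map (Subtype.val : {w : Fin n | l j < w} → Fin n) '' D'' := by
        intro h
        have h0 : (0 : Fin n) ∈ (s((0 : Fin n), j) : Sym2 (Fin n)) := by simp
        have hlt := hhigh _ h 0 h0
        have h00 : ((0 : Fin n) : ℕ) = 0 := Fin.val_zero n
        rw [Fin.lt_def] at hlt
        omega
      rw [Set.ncard_insert_of_notMem hnotmem (Set.toFinite _),
        Set.ncard_image_of_injective _ (hinj j), hcard, ← hBj]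
      omega
end

section
/- Let G be a split graph with vertex partition into an independent set S and a clique K. Then the edge open packing number of G equals max{ρ1, ρ2}, where ρ1 = max over distinct x, y ∈ K of max{l_x − l_{xy} + 1, l_y − l_{xy} + 1} with l_x = |S ∩ N(x)|, l_y = |S ∩ N(y)|, l_{xy} = |S ∩ N(x) ∩ N(y)|, and ρ2 = max over x ∈ K of |S ∩ N(x)| (with the conventions that ρ1 = 0 if |K| < 2 and ρ2 = 0 if K = ∅). -/
namespace EOPAux

open EOP

variable {V : Type*}

/-- A star with pairwise nonadjacent leaves is an EOP set. -/
lemma star_eop (G : SimpleGraph V) (c : V) (U : Set V)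
    (hU : ∀ u ∈ U, G.Adj c u) (hind : U.Pairwise fun a b => ¬ G.Adj a b) :
    IsEOPSet G ((fun u => s(c, u)) '' U) := by
  constructor
  · rintro e ⟨u, hu, rfl⟩
    exact hU u hu
  · rintro e1 ⟨u1, hu1, rfl⟩ e2 ⟨u2, hu2, rfl⟩ hne ⟨a, b, hab, hne1, hne2, ha, hb⟩
    have hu12 : u1 ≠ u2 := by rintro rfl; exact hne rfl
    rw [Sym2.mem_iff] at ha hb
    rcases ha with rfl | rfl <;> rcases hb with rfl | rfl
    · exact hab.ne rfl
    · exact hne2 rfl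
    · exact hne1 Sym2.eq_swap
    · exact hind hu1 hu2 hu12 hab

lemma star_ncard (G : SimpleGraph V) (c : V) (U : Set V)
    (hU : ∀ u ∈ U, G.Adj c u) :
    ((fun u => s(c, u)) '' U).ncard = U.ncard := by
  apply Set.ncard_image_of_injOn
  intro a _ b _ hab
  rw [Sym2.eq_iff] at hab
  rcases hab with ⟨-, h⟩ | ⟨h1, h2⟩
  · exact h
  · exact h2.trans h1

lemma eop_bdd [Fintype V] (G : SimpleGraph V) :
    BddAbove {n | ∃ D : Set (Sym2 V), IsEOPSet G D ∧ D.ncard = n} := by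
  classical
  refine ⟨Nat.card (Sym2 V), ?_⟩
  rintro n ⟨D, hD, rfl⟩
  calc D.ncard ≤ (Set.univ : Set (Sym2 V)).ncard :=
        Set.ncard_le_ncard (Set.subset_univ D) Set.finite_univ
    _ = Nat.card (Sym2 V) := Set.ncard_univ _

lemma le_eop [Fintype V] (G : SimpleGraph V) {D : Set (Sym2 V)} (hD : IsEOPSet G D) :
    D.ncard ≤ eopNumber G :=
  le_csSup (eop_bdd G) ⟨D, hD, rfl⟩

end EOPAux

open EOP EOPAux in
/-- For a split graph `G` with independent set `S` and maximum clique `K`,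
`ρ_e^o(G) = max{ρ₁, ρ₂}` where
`ρ₁ = max_{x ≠ y ∈ K} max{l_x - l_{xy} + 1, l_y - l_{xy} + 1}` and
`ρ₂ = max_{x ∈ K} l_x` (each `0` when the index set is empty). -/
theorem stmt_10 {V : Type*} [Fintype V] (G : SimpleGraph V) (S K : Set V)
    (hpart : S ∪ K = Set.univ) (hdisj : Disjoint S K)
    (hS : S.Pairwise fun a b => ¬ G.Adj a b) (hK : G.IsClique K)
    (hKmax : ∀ C : Set V, G.IsClique C → C.ncard ≤ K.ncard) :
    eopNumber G =
      max
        (sSup {m | ∃ x ∈ K, ∃ y ∈ K, x ≠ y ∧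
          m = max
            ((S ∩ {v | G.Adj x v}).ncard
              - (S ∩ {v | G.Adj x v} ∩ {v | G.Adj y v}).ncard + 1)
            ((S ∩ {v | G.Adj y v}).ncard
              - (S ∩ {v | G.Adj x v} ∩ {v | G.Adj y v}).ncard + 1)})
        (sSup {m | ∃ x ∈ K, m = (S ∩ {v | G.Adj x v}).ncard}) := by
  classical
  -- basic facts
  have hmemK : ∀ {a : V}, a ∉ S → a ∈ K := by
    intro a ha
    have : a ∈ S ∪ K := hpart ▸ Set.mem_univ a
    rcases this with h | h
    · exact absurd h ha
    · exact h
  have hedgeK : ∀ {a b : V}, G.Adj a b → a ∈ K ∨ b ∈ K := by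
    intro a b hab
    by_contra h
    push_neg at h
    by_cases hsa : a ∈ S
    · by_cases hsb : b ∈ S
      · exact hS hsa hsb hab.ne hab
      · exact h.2 (hmemK hsb)
    · exact h.1 (hmemK hsa)
  -- bounded above for the RHS sets
  have hcardV : ∀ (T : Set V), T.ncard ≤ Nat.card V := by
    intro T
    calc T.ncard ≤ (Set.univ : Set V).ncard :=
          Set.ncard_le_ncard (Set.subset_univ _) Set.finite_univ
      _ = Nat.card V := Set.ncard_univ _
  have bdd1 : BddAbove {m | ∃ x ∈ K, ∃ y ∈ K, x ≠ y ∧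
          m = max
            ((S ∩ {v | G.Adj x v}).ncard
              - (S ∩ {v | G.Adj x v} ∩ {v | G.Adj y v}).ncard + 1)
            ((S ∩ {v | G.Adj y v}).ncard
              - (S ∩ {v | G.Adj x v} ∩ {v | G.Adj y v}).ncard + 1)} := by
    refine ⟨Nat.card V + 1, ?_⟩
    rintro m ⟨x, -, y, -, -, rfl⟩
    have h1 := hcardV (S ∩ {v | G.Adj x v})
    have h2 := hcardV (S ∩ {v | G.Adj y v})
    exact max_le (by omega) (by omega)
  have bdd2 : BddAbove {m | ∃ x ∈ K, m = (S ∩ {v | G.Adj x v}).ncard} := by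
    refine ⟨Nat.card V, ?_⟩
    rintro m ⟨x, -, rfl⟩
    exact hcardV _
  -- helper : for x ≠ y in K, l_x - l_xy + 1 ≤ eopNumber G
  have helper1 : ∀ x ∈ K, ∀ y ∈ K, x ≠ y →
      (S ∩ {v | G.Adj x v}).ncard
        - (S ∩ {v | G.Adj x v} ∩ {v | G.Adj y v}).ncard + 1 ≤ eopNumber G := by
    intro x hx y hy hxy
    set B : Set V := (S ∩ {v | G.Adj x v}) \ {v | G.Adj y v} with hB
    have hyB : y ∉ B := fun h => hdisj.ne_of_mem h.1.1 hy rfl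
    have hUadj : ∀ u ∈ insert y B, G.Adj x u := by
      rintro u (rfl | hu)
      · exact hK hx hy hxy
      · exact hu.1.2
    have hind : (insert y B).Pairwise fun a b => ¬ G.Adj a b := by
      intro a ha b hb hab
      rcases ha with rfl | ha <;> rcases hb with rfl | hb
      · exact absurd rfl hab
      · exact fun h => hb.2 (show b ∈ {v | G.Adj a v} from h)
      · exact fun h => ha.2 (show a ∈ {v | G.Adj b v} from h.symm)
      · exact hS ha.1.1 hb.1.1 hab
    have heop := star_eop G x (insert y B) hUadj hind
    have hcard := star_ncard G x (insert y B) hUadj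
    have hBcard : B.ncard =
        (S ∩ {v | G.Adj x v}).ncard
          - (S ∩ {v | G.Adj x v} ∩ {v | G.Adj y v}).ncard := by
      have hBeq : B = (S ∩ {v | G.Adj x v}) \ (S ∩ {v | G.Adj x v} ∩ {v | G.Adj y v}) := by
        ext w
        simp only [hB, Set.mem_diff, Set.mem_inter_iff, Set.mem_setOf_eq]
        tauto
      rw [hBeq]
      exact Set.ncard_diff Set.inter_subset_left (Set.toFinite _)
    have hle := le_eop G heop
    rw [hcard, Set.ncard_insert_of_notMem hyB (Set.toFinite _), hBcard] at hle
    omega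
  -- helper : for x ∈ K, l_x ≤ eopNumber G
  have helper2 : ∀ x ∈ K, (S ∩ {v | G.Adj x v}).ncard ≤ eopNumber G := by
    intro x hx
    have hUadj : ∀ u ∈ S ∩ {v | G.Adj x v}, G.Adj x u := fun u hu => hu.2
    have hind : (S ∩ {v | G.Adj x v}).Pairwise fun a b => ¬ G.Adj a b :=
      hS.mono Set.inter_subset_left
    have hle := le_eop G (star_eop G x _ hUadj hind)
    rwa [star_ncard G x _ hUadj] at hle
  apply le_antisymm
  · -- upper bound
    have hne0 : (0 : ℕ) ∈ {n | ∃ D : Set (Sym2 V), IsEOPSet G D ∧ D.ncard = n} :=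
      ⟨∅, ⟨Set.empty_subset _, by simp⟩, by simp⟩
    apply csSup_le ⟨0, hne0⟩
    rintro n ⟨D, hD, rfl⟩
    rcases Set.eq_empty_or_nonempty D with rfl | ⟨e0, he0⟩
    · simp
    -- edge representation around a vertex
    have hrep : ∀ (c : V), ∀ e ∈ D, c ∈ e → ∃ u, G.Adj c u ∧ e = s(c, u) := by
      intro c e he hc
      induction e with
      | _ a b =>
        have hab : G.Adj a b := hD.1 he
        rw [Sym2.mem_iff] at hc
        rcases hc with rfl | rfl
        · exact ⟨b, hab, rfl⟩
        · exact ⟨a, hab.symm, Sym2.eq_swap.symm⟩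
    -- Step 1: there is c ∈ K belonging to all edges of D
    have hstar : ∃ c ∈ K, ∀ e ∈ D, c ∈ e := by
      -- any two edges of D intersect
      have hint : ∀ e1 ∈ D, ∀ e2 ∈ D, ∃ w, w ∈ e1 ∧ w ∈ e2 := by
        intro e1 he1 e2 he2
        by_contra h
        push_neg at h
        have hne : e1 ≠ e2 := by
          rintro rfl
          induction e1 with
          | _ a b => exact h a (Sym2.mem_mk_left a b) (Sym2.mem_mk_left a b)
        induction e1 with
        | _ a b =>
          induction e2 with
          | _ c d =>
            have hab : G.Adj a b := hD.1 he1
            have hcd : G.Adj c d := hD.1 he2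
            have key : ∀ p q : V, p ∈ K → q ∈ K → p ∈ s(a,b) → q ∈ s(c,d) → False := by
              intro p q hp hq hpm hqm
              have hpq : p ≠ q := fun hpq => h p hpm (hpq ▸ hqm)
              refine hD.2 _ he1 _ he2 hne ⟨p, q, hK hp hq hpq, ?_, ?_, hpm, hqm⟩
              · intro heq
                exact h q (heq ▸ Sym2.mem_mk_right p q) hqm
              · intro heq
                exact h p hpm (heq ▸ Sym2.mem_mk_left p q)
            rcases hedgeK hab with hc1 | hc1 <;> rcases hedgeK hcd with hc2 | hc2
            · exact key a c hc1 hc2 (Sym2.mem_mk_left a b) (Sym2.mem_mk_left c d)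
            · exact key a d hc1 hc2 (Sym2.mem_mk_left a b) (Sym2.mem_mk_right c d)
            · exact key b c hc1 hc2 (Sym2.mem_mk_right a b) (Sym2.mem_mk_left c d)
            · exact key b d hc1 hc2 (Sym2.mem_mk_right a b) (Sym2.mem_mk_right c d)
      by_cases hsub : ∀ e ∈ D, e = e0
      · -- singleton: take a K-endpoint of e0
        induction e0 with
        | _ a b =>
          have hab : G.Adj a b := hD.1 he0
          rcases hedgeK hab with hc | hc
          · exact ⟨a, hc, fun e he => (hsub e he) ▸ Sym2.mem_mk_left a b⟩
          · exact ⟨b, hc, fun e he => (hsub e he) ▸ Sym2.mem_mk_right a b⟩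
      · push_neg at hsub
        obtain ⟨e1, he1, hne10⟩ := hsub
        obtain ⟨c, hc1, hc0⟩ := hint e1 he1 e0 he0
        -- every edge contains c
        have hcall : ∀ e ∈ D, c ∈ e := by
          intro e he
          by_contra hce
          obtain ⟨a, ha, ha1⟩ := hint e he e1 he1
          obtain ⟨b, hb, hb0⟩ := hint e he e0 he0
          have hac : a ≠ c := fun h => hce (h ▸ ha)
          have hbc : b ≠ c := fun h => hce (h ▸ hb)
          have hab : a ≠ b := by
            rintro rfl
            exact hne10 (Sym2.eq_of_ne_mem hac ha1 hc1 hb0 hc0)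
          have he0eq : e0 = s(c, b) := by
            exact (Sym2.mem_and_mem_iff (Ne.symm hbc)).mp ⟨hc0, hb0⟩
          have hadjcb : G.Adj c b := by
            have := hD.1 he0
            rw [he0eq, SimpleGraph.mem_edgeSet] at this
            exact this
          have hne1e : e1 ≠ e := fun h => hce (h ▸ hc1)
          refine hD.2 _ he1 _ he hne1e ⟨c, b, hadjcb, ?_, ?_, hc1, hb⟩
          · intro heq
            have hb1 : b ∈ e1 := heq ▸ Sym2.mem_mk_right c b
            have : e1 = s(c, b) := (Sym2.mem_and_mem_iff (Ne.symm hbc)).mp ⟨hc1, hb1⟩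
            exact hne10 (this.trans he0eq.symm)
          · intro heq
            exact hce (heq ▸ Sym2.mem_mk_left c b)
        -- show c ∈ K
        refine ⟨c, ?_, hcall⟩
        by_contra hcK
        have hcS : c ∈ S := by
          by_contra h
          exact hcK (hmemK h)
        obtain ⟨u1, hadj1, he1eq⟩ := hrep c e1 he1 hc1
        obtain ⟨u0, hadj0, he0eq⟩ := hrep c e0 he0 hc0
        have hu10 : u1 ≠ u0 := by
          rintro rfl
          exact hne10 (he1eq.trans he0eq.symm)
        have hu1K : u1 ∈ K := by
          apply hmemK
          intro h
          exact hS hcS h hadj1.ne hadj1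
        have hu0K : u0 ∈ K := by
          apply hmemK
          intro h
          exact hS hcS h hadj0.ne hadj0
        have hne' : e1 ≠ e0 := hne10
        refine hD.2 _ he1 _ he0 hne' ⟨u1, u0, hK hu1K hu0K hu10, ?_, ?_,
          he1eq ▸ Sym2.mem_mk_right c u1, he0eq ▸ Sym2.mem_mk_right c u0⟩
        · rw [he1eq]
          intro heq
          rw [Sym2.eq_iff] at heq
          rcases heq with ⟨h1, -⟩ | ⟨-, h0⟩
          · exact hadj1.ne h1.symm
          · exact hadj0.ne h0.symm
        · rw [he0eq]
          intro heq
          rw [Sym2.eq_iff] at heq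
          rcases heq with ⟨h1, -⟩ | ⟨h1, -⟩
          · exact hadj1.ne h1.symm
          · exact hu10 h1
    obtain ⟨c, hcK, hcall⟩ := hstar
    set U : Set V := {u | G.Adj c u ∧ s(c, u) ∈ D} with hUdef
    have hDU : D = (fun u => s(c, u)) '' U := by
      apply Set.Subset.antisymm
      · intro e he
        obtain ⟨u, hadj, rfl⟩ := hrep c e he (hcall e he)
        exact ⟨u, ⟨hadj, he⟩, rfl⟩
      · rintro e ⟨u, hu, rfl⟩
        exact hu.2
    have hUadj : ∀ u ∈ U, G.Adj c u := fun u hu => hu.1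
    have hcard : D.ncard = U.ncard := by
      rw [hDU]; exact star_ncard G c U hUadj
    have hind : U.Pairwise fun a b => ¬ G.Adj a b := by
      intro u1 h1 u2 h2 hne hadj
      have hcu1 : c ≠ u1 := h1.1.ne
      have hcu2 : c ≠ u2 := h2.1.ne
      have hne' : s(c, u1) ≠ s(c, u2) := by
        intro h
        rw [Sym2.eq_iff] at h
        rcases h with ⟨-, h⟩ | ⟨h1', h2'⟩
        · exact hne h
        · exact hne (h2'.trans h1')
      refine hD.2 _ h1.2 _ h2.2 hne'
        ⟨u1, u2, hadj, ?_, ?_, Sym2.mem_mk_right c u1, Sym2.mem_mk_right c u2⟩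
      · intro heq
        rw [Sym2.eq_iff] at heq
        rcases heq with ⟨h, -⟩ | ⟨-, h⟩
        · exact hcu1 h.symm
        · exact hcu2 h.symm
      · intro heq
        rw [Sym2.eq_iff] at heq
        rcases heq with ⟨h, -⟩ | ⟨h, -⟩
        · exact hcu1 h.symm
        · exact hne h
    by_cases hUK : ∃ y ∈ U, y ∈ K
    · obtain ⟨y, hyU, hyK⟩ := hUK
      have hcy : c ≠ y := (hUadj y hyU).ne
      have hsub : U \ {y} ⊆
          (S ∩ {w | G.Adj c w}) \ (S ∩ {w | G.Adj c w} ∩ {w | G.Adj y w}) := by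
        rintro u ⟨huU, huy⟩
        have huy' : u ≠ y := huy
        have hnadj : ¬ G.Adj u y := hind huU hyU huy'
        have huS : u ∈ S := by
          by_contra h
          exact hnadj (hK (hmemK h) hyK huy')
        refine ⟨⟨huS, (hUadj u huU)⟩, ?_⟩
        rintro ⟨-, hadj⟩
        exact hnadj hadj.symm
      have h1 : (U \ {y}).ncard ≤
          (S ∩ {w | G.Adj c w}).ncard - (S ∩ {w | G.Adj c w} ∩ {w | G.Adj y w}).ncard := by
        rw [← Set.ncard_diff Set.inter_subset_left (Set.toFinite _)]
        exact Set.ncard_le_ncard hsub (Set.toFinite _)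
      have h2 : (U \ {y}).ncard + 1 = U.ncard :=
        Set.ncard_diff_singleton_add_one hyU (Set.toFinite _)
      have hmem : max
            ((S ∩ {w | G.Adj c w}).ncard
              - (S ∩ {w | G.Adj c w} ∩ {w | G.Adj y w}).ncard + 1)
            ((S ∩ {w | G.Adj y w}).ncard
              - (S ∩ {w | G.Adj c w} ∩ {w | G.Adj y w}).ncard + 1) ∈
          {m | ∃ x ∈ K, ∃ y ∈ K, x ≠ y ∧
            m = max
              ((S ∩ {v | G.Adj x v}).ncard
                - (S ∩ {v | G.Adj x v} ∩ {v | G.Adj y v}).ncard + 1)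
              ((S ∩ {v | G.Adj y v}).ncard
                - (S ∩ {v | G.Adj x v} ∩ {v | G.Adj y v}).ncard + 1)} :=
        ⟨c, hcK, y, hyK, hcy, rfl⟩
      have hle : D.ncard ≤ max
            ((S ∩ {w | G.Adj c w}).ncard
              - (S ∩ {w | G.Adj c w} ∩ {w | G.Adj y w}).ncard + 1)
            ((S ∩ {w | G.Adj y w}).ncard
              - (S ∩ {w | G.Adj c w} ∩ {w | G.Adj y w}).ncard + 1) := by
        have := le_max_left
            ((S ∩ {w | G.Adj c w}).ncard
              - (S ∩ {w | G.Adj c w} ∩ {w | G.Adj y w}).ncard + 1)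
            ((S ∩ {w | G.Adj y w}).ncard
              - (S ∩ {w | G.Adj c w} ∩ {w | G.Adj y w}).ncard + 1)
        omega
      exact le_trans hle (le_trans (le_csSup bdd1 hmem) (le_max_left _ _))
    · push_neg at hUK
      have hsub : U ⊆ S ∩ {w | G.Adj c w} := by
        intro u hu
        have huS : u ∈ S := by
          by_contra h
          exact hUK u hu (hmemK h)
        exact ⟨huS, hUadj u hu⟩
      have hle : D.ncard ≤ (S ∩ {w | G.Adj c w}).ncard := by
        rw [hcard]
        exact Set.ncard_le_ncard hsub (Set.toFinite _)
      have hmem : (S ∩ {w | G.Adj c w}).ncard ∈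
          {m | ∃ x ∈ K, m = (S ∩ {v | G.Adj x v}).ncard} := ⟨c, hcK, rfl⟩
      exact le_trans hle (le_trans (le_csSup bdd2 hmem) (le_max_right _ _))
  · -- lower bound
    apply max_le
    · rcases Set.eq_empty_or_nonempty {m | ∃ x ∈ K, ∃ y ∈ K, x ≠ y ∧
          m = max
            ((S ∩ {v | G.Adj x v}).ncard
              - (S ∩ {v | G.Adj x v} ∩ {v | G.Adj y v}).ncard + 1)
            ((S ∩ {v | G.Adj y v}).ncard
              - (S ∩ {v | G.Adj x v} ∩ {v | G.Adj y v}).ncard + 1)} with h | h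
      · rw [h, csSup_empty]
        exact bot_le
      · apply csSup_le h
        rintro m ⟨x, hx, y, hy, hxy, rfl⟩
        apply max_le
        · exact helper1 x hx y hy hxy
        · have h' := helper1 y hy x hx hxy.symm
          have heq : S ∩ {v | G.Adj y v} ∩ {v | G.Adj x v}
              = S ∩ {v | G.Adj x v} ∩ {v | G.Adj y v} := by
            ext w
            simp only [Set.mem_inter_iff, Set.mem_setOf_eq]
            tauto
          rwa [heq] at h'
    · rcases Set.eq_empty_or_nonempty {m | ∃ x ∈ K, m = (S ∩ {v | G.Adj x v}).ncard}
          with h | h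
      · rw [h, csSup_empty]
        exact bot_le
      · apply csSup_le h
        rintro m ⟨x, hx, rfl⟩
        exact helper2 x hx
end

section
/- Let G be a split graph with independent set S and clique K, let D be an edge open packing set of G containing an edge xy with x, y ∈ K, and let z ∈ S be adjacent to both x and y. Then no edge of D is incident to z. -/
open EOP in
/-- In a split graph, if an EOP set `D` contains an edge `xy` with `x, y ∈ K` and
`z ∈ S` is adjacent to both `x` and `y`, then no edge of `D` is incident to `z`. -/
theorem stmt_11 {V : Type*} (G : SimpleGraph V) (S K : Set V)
    (hpart : S ∪ K = Set.univ) (hdisj : Disjoint S K)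
    (hS : S.Pairwise fun a b => ¬ G.Adj a b) (hK : G.IsClique K)
    (D : Set (Sym2 V)) (hD : IsEOPSet G D)
    (x y z : V) (hx : x ∈ K) (hy : y ∈ K) (hxy : s(x, y) ∈ D)
    (hz : z ∈ S) (hzx : G.Adj z x) (hzy : G.Adj z y) :
    ∀ e ∈ D, z ∉ e := by
  intro e heD hze
  obtain ⟨w, rfl⟩ : ∃ w, e = s(z, w) := by
    induction e with
    | h p q =>
      rcases Sym2.mem_iff.mp hze with rfl | rfl
      · exact ⟨q, rfl⟩
      · exact ⟨p, Sym2.eq_swap⟩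
  have hzw : G.Adj z w := hD.1 heD
  have hwK : w ∈ K := by
    rcases (Set.eq_univ_iff_forall.mp hpart w) with hwS | hwK
    · rcases eq_or_ne z w with rfl | hne
      · exact absurd hzw G.irrefl
      · exact absurd hzw (hS hz hwS hne)
    · exact hwK
  have hzK : z ∉ K := fun h => (Set.disjoint_left.mp hdisj hz) h
  have hxyadj : G.Adj x y := hD.1 hxy
  have hxney : x ≠ y := hxyadj.ne
  have hzx' : z ≠ x := fun h => hzK (h ▸ hx)
  have hzy' : z ≠ y := fun h => hzK (h ▸ hy)
  have hne : s(z, w) ≠ s(x, y) := by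
    intro h
    rw [Sym2.eq_iff] at h
    rcases h with ⟨rfl, _⟩ | ⟨rfl, _⟩
    · exact hzx' rfl
    · exact hzy' rfl
  apply hD.2 _ heD _ hxy hne
  rcases eq_or_ne w x with rfl | hwx
  · exact ⟨z, y, hzy, by simp [Sym2.eq_iff]; tauto, by simp [Sym2.eq_iff]; tauto,
      by simp, by simp⟩
  · rcases eq_or_ne w y with rfl | hwy
    · exact ⟨z, x, hzx, by simp [Sym2.eq_iff]; tauto, by simp [Sym2.eq_iff]; tauto,
        by simp, by simp⟩
    · exact ⟨w, x, hK hwK hx hwx, by simp [Sym2.eq_iff]; tauto,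
        by simp [Sym2.eq_iff]; tauto, by simp, by simp⟩
end

section
/- Let G be a split graph with independent set S and clique K and let D be an edge open packing set of G containing an edge e = xy with x, y ∈ K. Then every other edge of D is incident to x or to y; that is, the subgraph induced by D is a star centered at x or at y. -/
open EOP in
/-- In a split graph, if an EOP set `D` contains an edge `xy` with `x, y ∈ K`, then
every edge of `D` is incident to `x`, or every edge of `D` is incident to `y`;
i.e. the subgraph induced by `D` is a star centered at `x` or at `y`. -/
theorem stmt_12 {V : Type*} (G : SimpleGraph V) (S K : Set V)
    (hpart : S ∪ K = Set.univ) (hdisj : Disjoint S K)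
    (hS : S.Pairwise fun a b => ¬ G.Adj a b) (hK : G.IsClique K)
    (D : Set (Sym2 V)) (hD : IsEOPSet G D)
    (x y : V) (hx : x ∈ K) (hy : y ∈ K) (hne : x ≠ y) (hxy : s(x, y) ∈ D) :
    (∀ e ∈ D, x ∈ e) ∨ (∀ e ∈ D, y ∈ e) := by
  -- First: every edge of D contains x or y.
  have claim : ∀ e ∈ D, x ∈ e ∨ y ∈ e := by
    intro e he
    induction e with
    | h a b =>
      by_contra h
      push_neg at h
      obtain ⟨hxe, hye⟩ := h
      simp only [Sym2.mem_iff] at hxe hye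
      push_neg at hxe hye
      obtain ⟨hxa, hxb⟩ := hxe
      obtain ⟨hya, hyb⟩ := hye
      have hab : G.Adj a b := hD.1 he
      -- one endpoint is in K
      have hKone : a ∈ K ∨ b ∈ K := by
        by_contra hk
        push_neg at hk
        have ha : a ∈ S := by
          have := Set.mem_univ a; rw [← hpart] at this
          rcases this with h | h
          · exact h
          · exact absurd h hk.1
        have hb : b ∈ S := by
          have := Set.mem_univ b; rw [← hpart] at this
          rcases this with h | h
          · exact h
          · exact absurd h hk.2
        exact hS ha hb hab.ne hab
      have hneq : s(x, y) ≠ s(a, b) := by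
        intro h
        rw [Sym2.eq_iff] at h
        rcases h with ⟨h1, _⟩ | ⟨h1, h2⟩
        · exact hxa h1
        · exact hxb h1
      apply hD.2 _ hxy _ he hneq
      rcases hKone with haK | hbK
      · exact ⟨x, a, hK hx haK (Ne.symm hxa).symm, by
          intro h; rw [Sym2.eq_iff] at h
          rcases h with ⟨_, h2⟩ | ⟨h1, _⟩
          · exact hya h2.symm
          · exact hne h1,
          by
          intro h; rw [Sym2.eq_iff] at h
          rcases h with ⟨h1, _⟩ | ⟨h1, _⟩
          · exact hxa h1
          · exact hxb h1,
          Sym2.mem_mk_left x y, Sym2.mem_mk_left a b⟩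
      · exact ⟨x, b, hK hx hbK (Ne.symm hxb).symm, by
          intro h; rw [Sym2.eq_iff] at h
          rcases h with ⟨_, h2⟩ | ⟨h1, _⟩
          · exact hyb h2.symm
          · exact hne h1,
          by
          intro h; rw [Sym2.eq_iff] at h
          rcases h with ⟨h1, h2⟩ | ⟨h1, _⟩
          · exact hxa h1
          · exact hxb h1,
          Sym2.mem_mk_left x y, Sym2.mem_mk_right a b⟩
  by_contra h
  push_neg at h
  obtain ⟨⟨e₁, he₁, hxe₁⟩, ⟨e₂, he₂, hye₂⟩⟩ := h
  have hye₁ : y ∈ e₁ := (claim e₁ he₁).resolve_left hxe₁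
  have hxe₂ : x ∈ e₂ := (claim e₂ he₂).resolve_right hye₂
  have hne12 : e₁ ≠ e₂ := fun h => hxe₁ (h ▸ hxe₂)
  apply hD.2 _ he₁ _ he₂ hne12
  refine ⟨y, x, hK hy hx hne.symm, ?_, ?_, hye₁, hxe₂⟩
  · intro h; exact hxe₁ (h ▸ Sym2.mem_mk_right y x)
  · intro h; exact hye₂ (h ▸ Sym2.mem_mk_left y x)
end

section
/- Let T be a tree. Then every edge open packing set of T is a set of edges whose induced subgraph is a disjoint union of stars such that the distance in T between any two distinct stars (i.e., between their vertex sets) is at least 2, and moreover the distance between the leaf-sets of two distinct stars, measured between their centers' edges appropriately, prevents any edge of T from joining endpoints of edges in different stars. -/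
open EOP in
/-- In a tree `T`, every EOP set `D` induces a disjoint union of stars (each edge has
a chosen center, and distinct edges meet only at their common center), the distance
in `T` between (the vertex sets of) any two distinct stars is at least `2`, and no
edge of `T` joins endpoints of edges lying in different stars. -/
theorem stmt_16 {V : Type*} (T : SimpleGraph V) (htree : T.Connected ∧ T.IsAcyclic)
    (D : Set (Sym2 V)) (hD : IsEOPSet T D) :
    ∃ f : Sym2 V → V, (∀ e ∈ D, f e ∈ e) ∧
      (∀ e₁ ∈ D, ∀ e₂ ∈ D, e₁ ≠ e₂ → ∀ v, v ∈ e₁ → v ∈ e₂ → v = f e₁ ∧ v = f e₂) ∧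
      (∀ e₁ ∈ D, ∀ e₂ ∈ D, f e₁ ≠ f e₂ →
        ∀ a b : V, a ∈ e₁ → b ∈ e₂ → 2 ≤ T.dist a b ∧ ¬ T.Adj a b) := by
  classical
  obtain ⟨hconn, _hacyc⟩ := htree
  obtain ⟨hsub, hpack⟩ := hD
  -- an edge of `D` meets other edges of `D` in at most one vertex
  have key : ∀ e₁ ∈ D, ∀ e₂ ∈ D, ∀ e₃ ∈ D, e₂ ≠ e₁ → e₃ ≠ e₁ →
      ∀ u v : V, u ∈ e₁ → u ∈ e₂ → v ∈ e₁ → v ∈ e₃ → u = v := by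
    intro e₁ h₁ e₂ h₂ e₃ h₃ h21 h31 u v hu1 hu2 hv1 hv3
    by_contra hne
    have he₁ : e₁ = s(u, v) := (Sym2.mem_and_mem_iff hne).mp ⟨hu1, hv1⟩
    have hadj : T.Adj u v := by
      have := hsub h₁
      rw [he₁] at this
      exact this
    have h23 : e₂ ≠ e₃ := by
      intro h
      subst h
      exact h21 (((Sym2.mem_and_mem_iff hne).mp ⟨hu2, hv3⟩).trans he₁.symm)
    exact hpack e₂ h₂ e₃ h₃ h23
      ⟨u, v, hadj, he₁ ▸ h21.symm, he₁ ▸ h31.symm, hu2, hv3⟩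
  let f : Sym2 V → V := fun e =>
    if h : ∃ u, u ∈ e ∧ ∃ e' ∈ D, e' ≠ e ∧ u ∈ e' then h.choose else e.out.1
  have hcen : ∀ e₁ ∈ D, ∀ e₂ ∈ D, e₂ ≠ e₁ → ∀ v : V, v ∈ e₁ → v ∈ e₂ → v = f e₁ := by
    intro e₁ h₁ e₂ h₂ hne v hv1 hv2
    have hP : ∃ u, u ∈ e₁ ∧ ∃ e' ∈ D, e' ≠ e₁ ∧ u ∈ e' := ⟨v, hv1, e₂, h₂, hne, hv2⟩
    have hfe : f e₁ = hP.choose := dif_pos hP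
    obtain ⟨hc1, e', he'D, he'ne, hce'⟩ := hP.choose_spec
    rw [hfe]
    exact key e₁ h₁ e₂ h₂ e' he'D hne he'ne v hP.choose hv1 hv2 hc1 hce'
  refine ⟨f, ?_, ?_, ?_⟩
  · intro e _he
    by_cases h : ∃ u, u ∈ e ∧ ∃ e' ∈ D, e' ≠ e ∧ u ∈ e'
    · have hfe : f e = h.choose := dif_pos h
      rw [hfe]
      exact h.choose_spec.1
    · have hfe : f e = e.out.1 := dif_neg h
      rw [hfe]
      exact Sym2.out_fst_mem e
  · intro e₁ h₁ e₂ h₂ hne v hv1 hv2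
    exact ⟨hcen e₁ h₁ e₂ h₂ hne.symm v hv1 hv2, hcen e₂ h₂ e₁ h₁ hne v hv2 hv1⟩
  · intro e₁ h₁ e₂ h₂ hfne a b ha hb
    have hne : e₁ ≠ e₂ := by
      rintro rfl
      exact hfne rfl
    have hab : a ≠ b := by
      rintro rfl
      exact hfne ((hcen e₁ h₁ e₂ h₂ hne.symm a ha hb).symm.trans
        (hcen e₂ h₂ e₁ h₁ hne a hb ha))
    have hnadj : ¬ T.Adj a b := by
      intro hadj
      by_cases h1 : s(a, b) = e₁
      · have hb1 : b ∈ e₁ := h1 ▸ Sym2.mem_mk_right a b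
        exact hfne ((hcen e₁ h₁ e₂ h₂ hne.symm b hb1 hb).symm.trans
          (hcen e₂ h₂ e₁ h₁ hne b hb hb1))
      · by_cases h2 : s(a, b) = e₂
        · have ha2 : a ∈ e₂ := h2 ▸ Sym2.mem_mk_left a b
          exact hfne ((hcen e₁ h₁ e₂ h₂ hne.symm a ha ha2).symm.trans
            (hcen e₂ h₂ e₁ h₁ hne a ha2 ha))
        · exact hpack e₁ h₁ e₂ h₂ hne ⟨a, b, hadj, h1, h2, ha, hb⟩
    refine ⟨?_, hnadj⟩
    have hpos : 0 < T.dist a b := hconn.pos_dist_of_ne hab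
    have hone : T.dist a b ≠ 1 := fun h => hnadj (SimpleGraph.dist_eq_one_iff_adj.mp h)
    omega
end
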